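/- arXiv:2211.03953 — 5 statements merged into one kernel-verified Lean document; each statement's English description precedes it below -/
import Mathlib

section
/- Let P be a (3+1)-free finite poset and A a P-array. Then the following are equivalent: (i) A is a P-tableau (its shape is a skew partition shape and rows are non-decreasing in P, i.e., A(i,j) is never >_P A(i,j+1)); (ii) A has no adjacent pair of intersecting columns; (iii) A has no pair of intersecting columns. -/
open MvPolynomial
open scoped Classical

noncomputable section

/-- A poset is `(3+1)`-free: no induced subposet consisting of a 3-chain
together with an element incomparable to all of it. -/
def ThreePlusOneFree (P : Type*) [PartialOrder P] : Prop :=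
  ¬ ∃ a b c x : P, a < b ∧ b < c ∧
    ¬(x ≤ a ∨ a ≤ x) ∧ ¬(x ≤ b ∨ b ≤ x) ∧ ¬(x ≤ c ∨ c ≤ x)

/-- The `P`-elementary function `e_k^P(u)`, the sum of `u_{i_1} ⋯ u_{i_k}`
over strict chains `i_1 <_P ⋯ <_P i_k`. -/
def eP (P : Type*) [Fintype P] [PartialOrder P] (k : ℕ) : MvPolynomial P ℤ :=
  ∑ f ∈ Finset.univ.filter (fun f : Fin k → P => ∀ a b : Fin k, a < b → f a < f b),
    ∏ i, X (f i)

/-- `e_k^P` for an integer index, vanishing for negative `k`. -/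
def ePz (P : Type*) [Fintype P] [PartialOrder P] (k : ℤ) : MvPolynomial P ℤ :=
  if 0 ≤ k then eP P k.toNat else 0

/-- Conjugate partition: `conj f c` is the length of column `c` (0-indexed)
of the diagram of `f`. -/
def conj (f : ℕ → ℕ) (c : ℕ) : ℕ := Set.ncard {i | c < f i}

/-- `f : ℕ → ℕ` (0-indexed list of parts) is a partition. -/
def IsPartition (f : ℕ → ℕ) : Prop := (∀ i, f (i + 1) ≤ f i) ∧ ∃ N, ∀ i, N ≤ i → f i = 0

/-- `λ/μ/d` is a cylindric shape. -/
def IsCylShape (lam mu : ℕ → ℕ) (d : ℕ) : Prop :=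
  IsPartition lam ∧ IsPartition mu ∧ (∀ i, mu i ≤ lam i) ∧ 0 < lam 0 ∧
    conj lam 0 ≤ conj lam (lam 0 - 1) + d ∧
    conj mu 0 ≤ conj mu (lam 0 - 1) + d ∧ d ≤ conj lam 0

section Arrays
variable {P : Type*} [PartialOrder P]

/-- Column-strictness of the array `A` (a total function; only values on the cells
of the shape `col(α,β)`, over `l` columns, matter): entries strictly increase
down each column. This is the defining condition for a `P`-array. -/
def ColStrict (A : ℕ → ℕ → P) (l : ℕ) (α β : ℕ → ℕ) : Prop :=
  ∀ c r r', c < l → β c ≤ r → r < r' → r' < α c → A r c < A r' c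

/-- `col(α,β)` (with `β` a partition) is a skew partition shape. -/
def IsSkewShape (l : ℕ) (α β : ℕ → ℕ) : Prop :=
  (∀ c, c + 1 < l → α (c + 1) ≤ α c ∧ β (c + 1) ≤ β c) ∧ ∀ c, c < l → β c ≤ α c

/-- Rows of `A` are weakly increasing in `P`: no entry is `>_P` its right neighbour. -/
def RowWeak (A : ℕ → ℕ → P) (l : ℕ) (α β : ℕ → ℕ) : Prop :=
  ∀ r c, c + 1 < l → β c ≤ r → r < α c → β (c + 1) ≤ r → r < α (c + 1) →
    ¬ A r (c + 1) < A r c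

/-- `A` is a `P`-tableau of shape `col(α,β)`. -/
def IsPTableau (A : ℕ → ℕ → P) (l : ℕ) (α β : ℕ → ℕ) : Prop :=
  IsSkewShape l α β ∧ ColStrict A l α β ∧ RowWeak A l α β

/-- The glued array `A^d`: columns `0,…,l-1` of `A` shifted down by `d`, and a copy
of column `0` of `A` as the extra column `l`. -/
def glueArr (A : ℕ → ℕ → P) (l d : ℕ) : ℕ → ℕ → P :=
  fun r c => if c < l then A (r - d) c else A r 0

/-- Column lengths of the glued shape. -/
def glueCol (f : ℕ → ℕ) (l d : ℕ) : ℕ → ℕ :=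
  fun c => if c < l then f c + d else f 0

/-- `(r,j)` is an intersection point of columns `i < j` of `A`
(shape `col(α,β)`), with witness in column `i`. -/
def IsIntPoint (A : ℕ → ℕ → P) (α β : ℕ → ℕ) (i j r : ℕ) : Prop :=
  i < j ∧ β j ≤ r ∧ r < α j ∧
    ∃ w, w + j = r + 1 + i ∧ β i ≤ w ∧ (α i ≤ w ∨ A r j < A w i)

/-- Columns `i < j` of `A` intersect. -/
def Intersecting (A : ℕ → ℕ → P) (α β : ℕ → ℕ) (i j : ℕ) : Prop :=
  ∃ r, IsIntPoint A α β i j r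

/-- `(r,j)` is a `P`-minimal intersection point of the array `A` with columns `0,…,L`. -/
def PMinIP (A : ℕ → ℕ → P) (α β : ℕ → ℕ) (L j r : ℕ) : Prop :=
  j ≤ L ∧ (∃ i, IsIntPoint A α β i j r) ∧
    ∀ j' r' i', j' ≤ L → IsIntPoint A α β i' j' r' → ¬ A r' j' < A r j

/-- `(r,j)` is the rightmost `P`-minimal intersection point. -/
def RightmostPMinIP (A : ℕ → ℕ → P) (α β : ℕ → ℕ) (L j r : ℕ) : Prop :=
  PMinIP A α β L j r ∧ ∀ j' r', PMinIP A α β L j' r' → j' ≤ j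

/-- The cylindric swap `swap(A,i,j,d)` at the `P`-minimal intersection point `m` of
columns `i < j ≤ l` of `A^d` (the minimal intersection point is the lowest-row one,
since column `j` is a chain).  Everything is in the coordinates of `A`; the case
`j = l` is the wrap-around case, where entries move between column `i` and column `0`. -/
def swapArr (A : ℕ → ℕ → P) (l d i j : ℕ) (α β : ℕ → ℕ) : ℕ → ℕ → P :=
  let m := sInf {r | IsIntPoint (glueArr A l d) (glueCol α l d) (glueCol β l d) i j r}
  if j < l then
    fun r c =>
      if c = i ∧ m + 1 + i ≤ r + j + d then A (r + (j - i)) j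
      else if c = j ∧ m + 1 ≤ r + d then A (r - (j - i)) i
      else A r c
  else
    fun r c =>
      if c = i ∧ m + 1 + i ≤ r + j + d then A (r + (j - i) + d) 0
      else if c = 0 ∧ m + 1 ≤ r then A (r - (d + (j - i))) i
      else A r c

end Arrays

/-- A cylindric `P`-tableau of shape `λ/μ/d`, encoded column by column:
`T c p` is the entry of column `c` in the `p`-th cell from the top
(global row `conj μ c + p`).  The condition is that the glued filling `T^d`
is a `P`-tableau: the glued shape is a skew shape, columns strictly increase
in `P`, and rows (including the wrap-around adjacency between the last column
and the copy of column `0` shifted up by `d`) weakly increase in `P`. -/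
def IsCylTab {P : Type*} [PartialOrder P] (lam mu : ℕ → ℕ) (d : ℕ)
    (T : ∀ c : Fin (lam 0), Fin (conj lam c - conj mu c) → P) : Prop :=
  (∀ c, c + 1 < lam 0 → conj lam (c + 1) ≤ conj lam c ∧ conj mu (c + 1) ≤ conj mu c) ∧
  (∀ c, c < lam 0 → conj mu c ≤ conj lam c) ∧
  (0 < lam 0 → conj lam 0 ≤ conj lam (lam 0 - 1) + d ∧ conj mu 0 ≤ conj mu (lam 0 - 1) + d) ∧
  (∀ c p q, p < q → T c p < T c q) ∧
  (∀ (c : Fin (lam 0)) (hc : c.1 + 1 < lam 0)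
      (p : Fin (conj lam c.1 - conj mu c.1)) (q : Fin (conj lam (c.1 + 1) - conj mu (c.1 + 1))),
      conj mu c.1 + p.1 = conj mu (c.1 + 1) + q.1 → ¬ T ⟨c.1 + 1, hc⟩ q < T c p) ∧
  (∀ (h0 : 0 < lam 0) (p : Fin (conj lam (lam 0 - 1) - conj mu (lam 0 - 1)))
      (q : Fin (conj lam 0 - conj mu 0)),
      conj mu (lam 0 - 1) + p.1 + d = conj mu 0 + q.1 →
      ¬ T ⟨0, h0⟩ q < T ⟨lam 0 - 1, Nat.sub_lt h0 Nat.one_pos⟩ p)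

/-- The `u`-monomial weight `u^T` of a tableau. -/
def uT {P : Type*} (lam mu : ℕ → ℕ)
    (T : ∀ c : Fin (lam 0), Fin (conj lam c - conj mu c) → P) : MvPolynomial P ℤ :=
  ∏ c, ∏ p, X (T c p)

/-- Number of occurrences of the value `x` in the tableau `T`. -/
def tabCount {P : Type*} (lam mu : ℕ → ℕ)
    (T : ∀ c : Fin (lam 0), Fin (conj lam c - conj mu c) → P) (x : P) : ℕ :=
  ∑ c, (Finset.univ.filter (fun p => T c p = x)).card

/-- `T` is standard: it contains each element of `P` exactly once. -/
def IsStandardTab {P : Type*} (lam mu : ℕ → ℕ)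
    (T : ∀ c : Fin (lam 0), Fin (conj lam c - conj mu c) → P) : Prop :=
  ∀ x : P, tabCount lam mu T x = 1

/-- The chromatic symmetric polynomial of the incomparability graph `inc(P)`,
in the variables `x_0, …, x_{N-1}`. -/
def chromPoly (P : Type*) [Fintype P] [PartialOrder P] (N : ℕ) : MvPolynomial (Fin N) ℤ :=
  ∑ κ ∈ Finset.univ.filter
      (fun κ : P → Fin N => ∀ a b : P, a ≠ b → ¬(a ≤ b ∨ b ≤ a) → κ a ≠ κ b),
    ∏ v, X (κ v)

end

private lemma mono_of_step {f : ℕ → ℕ} {l : ℕ} (h : ∀ c, c + 1 < l → f (c + 1) ≤ f c) :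
    ∀ i j, i ≤ j → j < l → f j ≤ f i := by
  intro i j hij hj
  induction j with
  | zero => simp [Nat.le_zero.mp hij]
  | succ n ih =>
    rcases Nat.eq_or_lt_of_le hij with h1 | h1
    · rw [h1]
    · exact le_trans (h n hj) (ih (Nat.lt_succ_iff.mp h1) (Nat.lt_of_succ_lt hj))

private lemma no_int_aux {P : Type*} [PartialOrder P] (h31 : ThreePlusOneFree P)
    (l : ℕ) (α β : ℕ → ℕ) (A : ℕ → ℕ → P) (hA : ColStrict A l α β)
    (hα : ∀ c, c + 1 < l → α (c + 1) ≤ α c) (hβ : ∀ c, c + 1 < l → β (c + 1) ≤ β c)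
    (hrow : RowWeak A l α β) :
    ∀ g i j r, j = i + g → j < l → ¬ IsIntPoint A α β i j r := by
  intro g
  induction g with
  | zero => rintro i j r rfl hj ⟨hij, -⟩; omega
  | succ g ih =>
    rintro i j r hjeq hj ⟨hij, hβj, hrj, w, hw, hβi, hcase⟩
    have hil : i < l := by omega
    have hi1l : i + 1 < l := by omega
    have hwr : w + g = r := by omega
    have hαji : α j ≤ α i := mono_of_step hα i j (by omega) hj
    have hβji : β (i + 1) ≤ β i := hβ i hi1l
    -- the shape-emptiness disjunct is impossible
    have hxz : A r j < A w i := by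
      rcases hcase with h | h
      · omega
      · exact h
    rcases Nat.eq_zero_or_pos g with rfl | hg
    · -- adjacent columns: row weakness is violated at row w = r
      obtain rfl : j = i + 1 := by omega
      obtain rfl : w = r := by omega
      exact hrow w i hi1l hβi (by omega) hβj hrj hxz
    · -- gap at least 2
      have hαji1 : α j ≤ α (i + 1) := mono_of_step hα (i + 1) j (by omega) hj
      have hw1r : w + 1 ≤ r := by omega
      have hβi1w : β (i + 1) ≤ w := le_trans hβji hβi
      have hwαi1 : w + 1 < α (i + 1) := by omega
      have hwαi : w + 1 < α i := by omega
      set x := A w i with hxdef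
      set x' := A (w + 1) i with hx'def
      set z := A r j with hzdef
      set a := A w (i + 1) with hadef
      set b := A (w + 1) (i + 1) with hbdef
      have hab : a < b := hA (i + 1) w (w + 1) hi1l hβi1w (Nat.lt_succ_self w) hwαi1
      have hxx' : x < x' := hA i w (w + 1) hil hβi (Nat.lt_succ_self w) hwαi
      have hax : ¬ a < x := hrow w i hi1l hβi (by omega) hβi1w (by omega)
      have hbx' : ¬ b < x' := hrow (w + 1) i hi1l (by omega) hwαi (by omega) hwαi1
      have hzb : ¬ z < b := by
        intro hlt
        exact ih (i + 1) j r (by omega) hj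
          ⟨by omega, hβj, hrj, w + 1, by omega, by omega, Or.inr hlt⟩
      refine h31 ⟨z, x, x', b, hxz, hxx', ?_, ?_, ?_⟩
      · rintro (h | h)
        · exact hax (hab.trans_le (h.trans hxz.le))
        · rcases lt_or_eq_of_le h with h' | h'
          · exact hzb h'
          · exact hax (hab.trans_le (h' ▸ hxz.le))
      · rintro (h | h)
        · exact hax (hab.trans_le h)
        · exact hzb (hxz.trans_le h)
      · rintro (h | h)
        · rcases lt_or_eq_of_le h with h' | h'
          · exact hbx' h'
          · exact hzb (hxz.trans (h' ▸ hxx'))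
        · exact hzb (hxz.trans (hxx'.trans_le h))

/-- for a `(3+1)`-free poset `P` and a `P`-array `A` of shape
`col(α,β)` (`β` a partition), the following are equivalent:
(i) `A` is a `P`-tableau; (ii) `A` has no adjacent pair of intersecting columns;
(iii) `A` has no pair of intersecting columns. -/
theorem stmt_1 (P : Type*) [PartialOrder P] (h31 : ThreePlusOneFree P)
    (l : ℕ) (α β : ℕ → ℕ)
    (hβ : ∀ c, c + 1 < l → β (c + 1) ≤ β c)
    (hsub : ∀ c, c < l → β c ≤ α c)
    (A : ℕ → ℕ → P) (hA : ColStrict A l α β) :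
    List.TFAE [IsPTableau A l α β,
      ∀ c, c + 1 < l → ¬ Intersecting A α β c (c + 1),
      ∀ i j, j < l → ¬ Intersecting A α β i j] := by
  tfae_have 1 → 3 := by
    rintro ⟨hskew, -, hrow⟩ i j hj ⟨r, hint⟩
    have hij := hint.1
    exact no_int_aux h31 l α β A hA (fun c hc => (hskew.1 c hc).1) hβ hrow
      (j - i) i j r (by omega) hj hint
  tfae_have 3 → 2 := by
    intro h c hc
    exact h c (c + 1) hc
  tfae_have 2 → 1 := by
    intro h
    refine ⟨⟨fun c hc => ⟨?_, hβ c hc⟩, hsub⟩, hA, ?_⟩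
    · by_contra hlt
      push_neg at hlt
      have h1 : β (c + 1) ≤ β c := hβ c hc
      have h2 : β c ≤ α c := hsub c (by omega)
      exact h c hc ⟨α (c + 1) - 1, Nat.lt_succ_self c, by omega, by omega,
        α (c + 1) - 1, by omega, by omega, Or.inl (by omega)⟩
    · intro r c hc hβc hαc hβc1 hαc1 hlt
      exact h c hc ⟨r, Nat.lt_succ_self c, hβc1, hαc1, r, by omega, hβc, Or.inr hlt⟩
  tfae_finish
end

section
/- Fix a cylindric shape λ/μ/d with λ_1 columns. If A is a P-array of shape col(π_d^k(λ), μ') for some permutation π ∈ S_{λ_1} and integer vector k = (k_1,...,k_{λ_1}) summing to 0, and the glued array A^d (obtained by appending a copy of the first column of A to the right, shifted up by d cells) is a P-tableau, then π is the identity permutation and k = 0. -/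
open MvPolynomial
open scoped Classical

lemma conj_anti' {f : ℕ → ℕ} (hf : IsPartition f) {a b : ℕ} (hab : a ≤ b) :
    conj f b ≤ conj f a := by
  obtain ⟨-, N, hN⟩ := hf
  have hfin : {i | a < f i}.Finite := by
    apply Set.Finite.subset (Set.finite_Iio N)
    intro i hi
    by_contra h
    simp only [Set.mem_Iio, not_lt] at h
    have := hN i h
    simp [Set.mem_setOf_eq, this] at hi
  exact Set.ncard_le_ncard (fun i hi => lt_of_le_of_lt hab hi) hfin

/-- (fixed points of the involution) if `A` is a `P`-array of shape
`col(π_d^k(λ), μ')` and the glued array `A^d` is a `P`-tableau, then `π = id` and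
`k = 0`. -/
theorem stmt_2 (P : Type*) [PartialOrder P]
    (lam mu : ℕ → ℕ) (d : ℕ) (hshape : IsCylShape lam mu d)
    (π : Equiv.Perm (Fin (lam 0))) (k : Fin (lam 0) → ℤ) (hk : ∑ i, k i = 0)
    (α : ℕ → ℕ)
    (hα : ∀ i : Fin (lam 0), (α i.1 : ℤ)
        = k i * ((lam 0 + d : ℕ) : ℤ) + (conj lam (π i).1 : ℤ) + (i.1 : ℤ) - ((π i).1 : ℤ))
    (A : ℕ → ℕ → P) (hA : ColStrict A (lam 0) α (conj mu))
    (htab : IsPTableau (glueArr A (lam 0) d) (lam 0 + 1)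
        (glueCol α (lam 0) d) (glueCol (conj mu) (lam 0) d)) :
    π = 1 ∧ k = 0 := by
  obtain ⟨hlam, hmu, hlemu, hl, hcycl, hcycm, hdle⟩ := hshape
  obtain ⟨hsk, -, -⟩ := htab
  -- the integer period
  set n : ℤ := (lam 0 : ℤ) + (d : ℤ) with hndef
  have hn1 : (1 : ℤ) ≤ n := by omega
  have hlast : lam 0 - 1 < lam 0 := Nat.sub_lt hl Nat.one_pos
  -- w : column content function
  set w : ℕ → ℤ := fun c => (conj lam c : ℤ) - c with hwdef
  have hwanti : ∀ a b : ℕ, a ≤ b → w b ≤ w a := by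
    intro a b hab
    have h1 : conj lam b ≤ conj lam a := conj_anti' hlam hab
    simp only [hwdef]
    omega
  have hw0l : w 0 - w (lam 0 - 1) ≤ n - 1 := by
    have h1 : conj lam 0 ≤ conj lam (lam 0 - 1) + d := hcycl
    simp only [hwdef]
    omega
  -- α is antitone on columns 0..(lam 0)-1
  have hstep : ∀ c, c + 1 < lam 0 → α (c + 1) ≤ α c := by
    intro c hc
    have h := (hsk.1 c (by omega)).1
    simp only [glueCol] at h
    rw [if_pos hc, if_pos (by omega : c < lam 0)] at h
    omega
  have hαmono : ∀ i j : ℕ, i ≤ j → j < lam 0 → α j ≤ α i := by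
    intro i j hij
    induction j, hij using Nat.le_induction with
    | base => intro _; exact le_rfl
    | succ m hm ih =>
      intro hml
      exact le_trans (hstep m hml) (ih (by omega))
  have hwrap : α 0 ≤ α (lam 0 - 1) + d := by
    have h := (hsk.1 (lam 0 - 1) (by omega)).1
    simp only [glueCol] at h
    rw [if_neg (by omega : ¬ (lam 0 - 1 + 1 < lam 0)),
      if_pos (by omega : lam 0 - 1 < lam 0)] at h
    exact h
  -- V : diagonal-adjusted column lengths
  set V : Fin (lam 0) → ℤ := fun i => (α i.1 : ℤ) - (i.1 : ℤ) with hVdef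
  have hVw : ∀ i : Fin (lam 0), V i = k i * n + w (π i).1 := by
    intro i
    have h := hα i
    have hc : ((lam 0 + d : ℕ) : ℤ) = n := by push_cast; omega
    simp only [hVdef, hwdef]
    rw [h, hc]
    ring
  have hVle : ∀ i j : Fin (lam 0), i.1 ≤ j.1 → V j ≤ V i + (i.1 : ℤ) - (j.1 : ℤ) := by
    intro i j hij
    have h1 : α j.1 ≤ α i.1 := hαmono i.1 j.1 hij j.2
    simp only [hVdef]
    omega
  have hVbound : ∀ i j : Fin (lam 0), V i - V j ≤ n - 1 := by
    intro i j
    have h1 : V i ≤ V ⟨0, hl⟩ + ((0 : ℕ) : ℤ) - (i.1 : ℤ) := hVle ⟨0, hl⟩ i (Nat.zero_le _)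
    have h2 : V ⟨lam 0 - 1, hlast⟩ ≤ V j + (j.1 : ℤ) - ((lam 0 - 1 : ℕ) : ℤ) :=
      hVle j ⟨lam 0 - 1, hlast⟩ (Nat.le_pred_of_lt j.2)
    have h3 : V ⟨0, hl⟩ ≤ V ⟨lam 0 - 1, hlast⟩ + (n - 1) := by
      have ha : (α 0 : ℤ) ≤ (α (lam 0 - 1) : ℤ) + d := by exact_mod_cast hwrap
      simp only [hVdef]
      omega
    have hj : (j.1 : ℤ) ≤ ((lam 0 - 1 : ℕ) : ℤ) := by
      have := j.2; omega
    have hi : ((0 : ℕ) : ℤ) ≤ (i.1 : ℤ) := by positivity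
    linarith
  -- Step 1 : all k i = 0
  have hk0 : ∀ i, k i = 0 := by
    by_contra hne
    push_neg at hne
    obtain ⟨i0, hi0⟩ := hne
    have hpos : ∃ a, 0 < k a := by
      by_contra h
      push_neg at h
      have hz := (Finset.sum_eq_zero_iff_of_nonpos (fun j _ => h j)).mp hk
      exact hi0 (hz i0 (Finset.mem_univ _))
    have hneg : ∃ b, k b < 0 := by
      by_contra h
      push_neg at h
      have hz := (Finset.sum_eq_zero_iff_of_nonneg (fun j _ => h j)).mp hk
      exact hi0 (hz i0 (Finset.mem_univ _))
    obtain ⟨a, ha⟩ := hpos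
    obtain ⟨b, hb⟩ := hneg
    have hwa : w (lam 0 - 1) ≤ w (π a).1 :=
      hwanti (π a).1 (lam 0 - 1) (by have := (π a).2; omega)
    have hwb : w (π b).1 ≤ w 0 := hwanti 0 (π b).1 (Nat.zero_le _)
    have hka : (1 : ℤ) ≤ k a := ha
    have hkb : k b ≤ -1 := by omega
    have hma : n ≤ k a * n := le_mul_of_one_le_left (by omega) hka
    have hmb : k b * n ≤ -n := by
      have := mul_le_mul_of_nonneg_right hkb (by omega : (0:ℤ) ≤ n)
      linarith
    have h1 := hVw a
    have h2 := hVw b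
    have h3 := hVbound a b
    linarith
  -- Step 2 : π = 1
  have hVeq : ∀ i : Fin (lam 0), V i = w (π i).1 := by
    intro i; rw [hVw i, hk0 i]; ring
  have hmono : StrictMono (π : Fin (lam 0) → Fin (lam 0)) := by
    intro i j hij
    have hij' : i.1 < j.1 := hij
    have h1 : V j < V i := by
      have := hVle i j (le_of_lt hij')
      omega
    rw [hVeq i, hVeq j] at h1
    by_contra hc
    push_neg at hc
    have hle : (π j).1 ≤ (π i).1 := hc
    exact absurd (hwanti (π j).1 (π i).1 hle) (by omega)
  have hsymm : StrictMono (π.symm : Fin (lam 0) → Fin (lam 0)) := by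
    intro a b h
    rw [← π.apply_symm_apply a, ← π.apply_symm_apply b] at h
    exact hmono.lt_iff_lt.mp h
  have hge : ∀ (f : Equiv.Perm (Fin (lam 0))), StrictMono (f : Fin (lam 0) → Fin (lam 0)) →
      ∀ m : ℕ, ∀ hm : m < lam 0, m ≤ (f ⟨m, hm⟩).1 := by
    intro f hf m
    induction m with
    | zero => intro _; exact Nat.zero_le _
    | succ p ih =>
      intro hm
      have hp := ih (by omega)
      have hlt : (f ⟨p, by omega⟩ : Fin (lam 0)) < f ⟨p + 1, hm⟩ :=
        hf (by simp [Fin.lt_def])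
      have hlt' : (f ⟨p, by omega⟩).1 < (f ⟨p + 1, hm⟩).1 := hlt
      omega
  have hfix : ∀ i : Fin (lam 0), π i = i := by
    intro i
    have h1 : i.1 ≤ (π i).1 := by
      have := hge π hmono i.1 i.2
      simpa using this
    have h2 : (π i).1 ≤ i.1 := by
      have h := hge π.symm hsymm (π i).1 (π i).2
      have h3 : (π.symm ⟨(π i).1, (π i).2⟩) = i := by simp
      rw [h3] at h
      exact h
    exact Fin.ext (le_antisymm h2 h1)
  exact ⟨Equiv.ext hfix, funext hk0⟩
end

section
/- Let λ = (r^c, t) with 0 < t ≤ r, a partition of n. Then the cylindric Schur function s_{(r^c t)/∅/1}(x) equals Σ_{μ ⊢ n, μ_1 ≤ r} m_μ(x), the sum of all monomial symmetric functions indexed by partitions of n with largest part at most r. -/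
open MvPolynomial
open scoped Classical

/-! Read a cylindric tableau of shape `(r^c, t)/∅/1` row by row, top to bottom. The row
conditions together with the wrap-around condition (last column of row `p` against first column
of row `p + 1`) say exactly that this reading word is weakly increasing, and column strictness says
that letters one row width apart are strictly increasing. For a weakly increasing word the latter
means that no letter occurs more than `r` times, and weakly increasing words are the same as
multisets. So the tableaux are the multisets of size `rc + t` with multiplicities at most `r`, and
summing their monomials by exponent shape gives the monomial symmetric functions `m_μ` with
`μ₁ ≤ r`. -/

open Finset

theorem Nat.mul_add_lt_mul_add_iff {W c t p col : ℕ} (hcol : col < W) (htW : t ≤ W) :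
    p * W + col < c * W + t ↔ p < c + if col < t then 1 else 0 := by
  split_ifs with h
  · constructor
    · intro hp
      by_contra! hcp
      nlinarith [Nat.mul_le_mul_right W hcp]
    · intro hp
      nlinarith [Nat.mul_le_mul_right W (Nat.lt_succ_iff.mp hp)]
  · constructor
    · intro hp
      by_contra! hcp
      nlinarith [Nat.mul_le_mul_right W hcp]
    · intro hp
      nlinarith [Nat.mul_le_mul_right W hp]

theorem Nat.mul_add_eq_succ_cases {W p col p' col' : ℕ} (hcol : col < W) (hcol' : col' < W)
    (h : p' * W + col' = p * W + col + 1) :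
    p' = p ∧ col' = col + 1 ∨ p' = p + 1 ∧ col' = 0 ∧ col + 1 = W := by
  rcases lt_trichotomy p' p with hlt | rfl | hgt
  · nlinarith [Nat.mul_le_mul_right W hlt]
  · omega
  · have hge := Nat.mul_le_mul_right W hgt
    have hle : p' * W ≤ (p + 1) * W := by nlinarith
    have hp' : p' = p + 1 := le_antisymm (Nat.le_of_mul_le_mul_right hle (by omega)) hgt
    subst hp'
    have : (p + 1) * W = p * W + W := by ring
    omega

section MonotoneTuples

variable {α : Type*} [LinearOrder α] {n : ℕ}

theorem Fin.monotone_of_le_of_val_eq_succ {w : Fin n → α}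
    (h : ∀ i j : Fin n, (j : ℕ) = i + 1 → w i ≤ w j) : Monotone w := by
  cases n with
  | zero => exact fun i => i.elim0
  | succ m => exact Fin.monotone_iff_le_succ.mpr fun i => h _ _ (by simp)

theorem Monotone.card_fiber_le_iff {w : Fin n → α} (hw : Monotone w) (K : ℕ) :
    (∀ x, #{i | w i = x} ≤ K) ↔ ∀ i j : Fin n, (i : ℕ) + K = j → w i < w j := by
  constructor
  · intro hK i j hij
    by_contra! hji
    have hconst : Icc i j ⊆ ({k | w k = w i} : Finset (Fin n)) := fun k hk => by
      rw [mem_Icc] at hk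
      simpa using le_antisymm ((hw hk.2).trans hji) (hw hk.1)
    have := (card_le_card hconst).trans (hK (w i))
    rw [Fin.card_Icc] at this
    omega
  · intro hlt x
    rcases eq_empty_or_nonempty ({i | w i = x} : Finset (Fin n)) with hS | hS
    · simp [hS]
    set a := min' _ hS
    have ha : w a = x := (mem_filter.mp (min'_mem _ hS)).2
    have hfiber : ∀ s : Fin n, w s = x → (a : ℕ) ≤ s ∧ (s : ℕ) < a + K := fun s hs => by
      refine ⟨min'_le _ s (by simpa using hs), ?_⟩
      by_contra! hle
      have hj : (a : ℕ) + K < n := hle.trans_lt s.2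
      have := (hlt a ⟨a + K, hj⟩ rfl).trans_le
        (hw (show (⟨a + K, hj⟩ : Fin n) ≤ s from hle))
      rw [ha, hs] at this
      exact this.false
    calc #{i | w i = x} = #(({i | w i = x} : Finset (Fin n)).map Fin.valEmbedding) :=
          (card_map _).symm
      _ ≤ #(Ico (a : ℕ) (a + K)) := card_le_card fun m hm => by
          obtain ⟨s, hs, rfl⟩ := mem_map.mp hm
          simpa using hfiber s (mem_filter.mp hs).2
      _ = K := by simp

variable (α n) in
def monotoneEquivSym : {w : Fin n → α // Monotone w} ≃ Sym α n where
  toFun w := ⟨List.ofFn w.1, by simp⟩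
  invFun s := ⟨fun i => (s.1.sort)[i.1]'(by simp [i.2]), fun _ _ hij =>
    (Multiset.pairwise_sort s.1 _).rel_get_of_le hij⟩
  left_inv w := by
    have hsort : (List.ofFn w.1 : Multiset α).sort = List.ofFn w.1 :=
      List.mergeSort_eq_self _ w.2.sortedLE_ofFn.pairwise
    ext i
    simp [hsort]
  right_inv s := by
    apply Subtype.ext
    change ((List.ofFn _ : List α) : Multiset α) = s.1
    conv_rhs => rw [← Multiset.sort_eq s.1 (· ≤ ·)]
    congr 1
    apply List.ext_getElem <;> simp

theorem monotoneEquivSym_coe (w : {w : Fin n → α // Monotone w}) :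
    (monotoneEquivSym α n w : Multiset α) = univ.val.map w.1 := by
  rw [Fin.univ_val_map]
  rfl

theorem count_monotoneEquivSym (w : {w : Fin n → α // Monotone w}) (x : α) :
    (monotoneEquivSym α n w : Multiset α).count x = #{i | w.1 i = x} := by
  rw [monotoneEquivSym_coe, Multiset.count_map, card_def, filter_val]
  simp_rw [eq_comm]

theorem prod_map_monotoneEquivSym {M : Type*} [CommMonoid M] (f : α → M)
    (w : {w : Fin n → α // Monotone w}) :
    ((monotoneEquivSym α n w : Multiset α).map f).prod = ∏ i, f (w.1 i) := by
  rw [monotoneEquivSym_coe, Multiset.map_map]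
  rfl

variable (α n) in
def boundedMonotoneEquivSym (K : ℕ) :
    {w : Fin n → α // Monotone w ∧ ∀ x, #{i | w i = x} ≤ K} ≃
      {s : Sym α n // ∀ x, (s : Multiset α).count x ≤ K} :=
  (Equiv.subtypeSubtypeEquivSubtypeInter _ _).symm.trans <|
    (monotoneEquivSym α n).subtypeEquiv fun w => by simp only [count_monotoneEquivSym]

end MonotoneTuples

theorem Nat.Partition.ofSym_parts_le_iff {σ : Type*} [DecidableEq σ] {n : ℕ} (s : Sym σ n)
    (K : ℕ) : (∀ p ∈ (Nat.Partition.ofSym s).parts, p ≤ K) ↔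
      ∀ x, (s : Multiset σ).count x ≤ K := by
  simp only [Nat.Partition.ofSym, Multiset.mem_map, Multiset.mem_dedup, forall_exists_index,
    and_imp, forall_apply_eq_imp_iff₂]
  exact ⟨fun h x => (em (x ∈ (s : Multiset σ))).elim (h x) fun hx => by simp [hx],
    fun h x _ => h x⟩

namespace MvPolynomial

theorem sum_msymm_filter {σ R : Type*} [Fintype σ] [DecidableEq σ] [CommSemiring R] {n : ℕ}
    (P : n.Partition → Prop) [DecidablePred P] :
    ∑ μ ∈ univ.filter P, msymm σ R μ =
      ∑ s : {s : Sym σ n // P (.ofSym s)}, ((s.1 : Multiset σ).map X).prod := by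
  have hfiber (μ : n.Partition) : msymm σ R μ =
      ∑ s ∈ univ.filter (fun s : Sym σ n => .ofSym s = μ),
        ((s : Multiset σ).map X).prod := by
    rw [msymm]
    exact (sum_subtype (univ.filter fun s : Sym σ n => .ofSym s = μ) (fun _ => by simp)
      fun s => ((s : Multiset σ).map X).prod).symm
  rw [sum_congr rfl fun μ _ => hfiber μ, sum_fiberwise_eq_sum_filter]
  refine sum_subtype _ (fun s => ?_) _
  simp

end MvPolynomial

theorem conj_zero (x : ℕ) : conj (fun _ => 0) x = 0 := by
  simp [conj]

abbrev rectRow (r c t : ℕ) : ℕ → ℕ := fun i => if i < c then r else if i = c then t else 0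

abbrev RectRowCell (r c t : ℕ) : Type :=
  Σ col : Fin (rectRow r c t 0), Fin (conj (rectRow r c t) col - conj (fun _ => 0) col)

abbrev RectRowFilling (r c t : ℕ) (α : Type*) :=
  ∀ col : Fin (rectRow r c t 0), Fin (conj (rectRow r c t) col - conj (fun _ => 0) col) → α

namespace RectRow

variable {r c t : ℕ}

theorem width_eq : rectRow r c t 0 = if 0 < c then r else t := by
  rcases Nat.eq_zero_or_pos c with h | h <;> simp [rectRow, h]

theorem width_pos (ht : 0 < t) (htr : t ≤ r) : 0 < rectRow r c t 0 := by
  rw [width_eq]; split <;> omega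

theorem le_width (htr : t ≤ r) : t ≤ rectRow r c t 0 := by
  rw [width_eq]; split <;> omega

theorem size_eq (r c t : ℕ) : r * c + t = c * rectRow r c t 0 + t := by
  rcases Nat.eq_zero_or_pos c with h | h <;> simp [width_eq, h, Nat.mul_comm]

theorem conj_eq {col : ℕ} (hcol : col < rectRow r c t 0) :
    conj (rectRow r c t) col = c + if col < t then 1 else 0 := by
  have hset : {i | col < rectRow r c t i} = ↑(range (c + if col < t then 1 else 0)) := by
    rw [width_eq] at hcol
    ext i
    simp only [rectRow, coe_range, Set.mem_Iio, Set.mem_ofPred_eq]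
    split_ifs at hcol ⊢ <;> omega
  rw [conj, hset, Set.ncard_coe_finset, card_range]

theorem colLen_eq {col : ℕ} (hcol : col < rectRow r c t 0) :
    conj (rectRow r c t) col - conj (fun _ => 0) col = c + if col < t then 1 else 0 := by
  rw [conj_eq hcol, conj_zero, Nat.sub_zero]

theorem index_lt_iff (htr : t ≤ r) {col p : ℕ} (hcol : col < rectRow r c t 0) :
    p * rectRow r c t 0 + col < r * c + t ↔
      p < conj (rectRow r c t) col - conj (fun _ => 0) col := by
  rw [colLen_eq hcol, size_eq r c t]
  exact Nat.mul_add_lt_mul_add_iff hcol (le_width htr)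

variable {α : Type*}

-- The cell of column `col` lying `p` cells from the top is letter `p * width + col` of the row
-- reading word.
def cellIndex (htr : t ≤ r) (x : RectRowCell r c t) : Fin (r * c + t) :=
  ⟨x.2 * rectRow r c t 0 + x.1, (index_lt_iff htr x.1.2).mpr x.2.2⟩

def cellEquiv (ht : 0 < t) (htr : t ≤ r) : RectRowCell r c t ≃ Fin (r * c + t) where
  toFun := cellIndex htr
  invFun k :=
    have hmod := Nat.mod_lt k (width_pos (c := c) ht htr)
    ⟨⟨k % rectRow r c t 0, hmod⟩, ⟨k / rectRow r c t 0,
      (index_lt_iff htr hmod).mp (by rw [Nat.div_add_mod']; exact k.2)⟩⟩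
  left_inv := by
    rintro ⟨⟨col, hcol⟩, ⟨p, hp⟩⟩
    have hmod : (p * rectRow r c t 0 + col) % rectRow r c t 0 = col := by
      rw [Nat.mul_add_mod_self_right, Nat.mod_eq_of_lt hcol]
    have hdiv : (p * rectRow r c t 0 + col) / rectRow r c t 0 = p := by
      rw [Nat.add_comm, Nat.add_mul_div_right _ _ (width_pos ht htr), Nat.div_eq_of_lt hcol,
        Nat.zero_add]
    refine Sigma.ext (Fin.ext hmod) ((Fin.heq_ext_iff
      (congrArg (fun x => conj (rectRow r c t) x - conj (fun _ => 0) x) hmod)).mpr hdiv)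
  right_inv k := Fin.ext (Nat.div_add_mod' k _)

theorem cellEquiv_apply (ht : 0 < t) (htr : t ≤ r) (x : RectRowCell r c t) :
    cellEquiv ht htr x = cellIndex htr x := rfl

def ofWord (htr : t ≤ r) (w : Fin (r * c + t) → α) : RectRowFilling r c t α :=
  fun col p => w (cellIndex htr ⟨col, p⟩)

theorem uT_ofWord {σ : Type*} (ht : 0 < t) (htr : t ≤ r) (w : Fin (r * c + t) → σ) :
    uT (rectRow r c t) (fun _ => 0) (ofWord htr w) = ∏ k, X (w k) := by
  rw [uT, ← Fintype.prod_sigma']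
  exact Fintype.prod_equiv (cellEquiv ht htr) _ _ fun _ => rfl

variable [LinearOrder α]

theorem monotone_of_isCylTab (ht : 0 < t) (htr : t ≤ r) {w : Fin (r * c + t) → α}
    (hT : IsCylTab (rectRow r c t) (fun _ => 0) 1 (ofWord htr w)) : Monotone w := by
  obtain ⟨-, -, -, -, hrow, hwrap⟩ := hT
  have hnext : ∀ x y : RectRowCell r c t, (cellIndex htr y : ℕ) = cellIndex htr x + 1 →
      w (cellIndex htr x) ≤ w (cellIndex htr y) := by
    rintro ⟨⟨col, hcol⟩, ⟨p, hp⟩⟩ ⟨⟨col', hcol'⟩, ⟨p', hp'⟩⟩ h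
    rcases Nat.mul_add_eq_succ_cases hcol hcol' h with ⟨rfl, rfl⟩ | ⟨rfl, rfl, hlast⟩
    · exact not_lt.mp
        (hrow ⟨col, hcol⟩ hcol' ⟨_, hp⟩ ⟨_, hp'⟩ (by simp only [conj_zero]))
    · obtain rfl : col = rectRow r c t 0 - 1 := by omega
      exact not_lt.mp (hwrap hcol' ⟨p, hp⟩ ⟨p + 1, hp'⟩ (by simp only [conj_zero]; rfl))
  refine Fin.monotone_of_le_of_val_eq_succ fun i j hij => ?_
  simpa only [← cellEquiv_apply ht htr, Equiv.apply_symm_apply] using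
    hnext ((cellEquiv ht htr).symm i) ((cellEquiv ht htr).symm j)
      (by simpa only [← cellEquiv_apply ht htr, Equiv.apply_symm_apply] using hij)

theorem lt_of_isCylTab (ht : 0 < t) (htr : t ≤ r) {w : Fin (r * c + t) → α}
    (hT : IsCylTab (rectRow r c t) (fun _ => 0) 1 (ofWord htr w)) {i j : Fin (r * c + t)}
    (hij : (i : ℕ) + rectRow r c t 0 = j) : w i < w j := by
  obtain ⟨-, -, -, hcolumn, -, -⟩ := hT
  obtain ⟨⟨⟨col, hcol⟩, ⟨p, hp⟩⟩, rfl⟩ := (cellEquiv ht htr).surjective i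
  have hj : (p + 1) * rectRow r c t 0 + col = j := by
    rw [← hij]
    simp only [cellEquiv_apply, cellIndex]
    ring
  have hp' := (index_lt_iff htr hcol).mp (hj ▸ j.2)
  rw [show j = cellIndex htr ⟨⟨col, hcol⟩, ⟨p + 1, hp'⟩⟩ from Fin.ext hj.symm]
  exact hcolumn ⟨col, hcol⟩ ⟨p, hp⟩ ⟨p + 1, hp'⟩ (Fin.mk_lt_mk.mpr p.lt_succ_self)

theorem isCylTab_ofWord (htr : t ≤ r) {w : Fin (r * c + t) → α} (hw : Monotone w)
    (hlt : ∀ i j : Fin (r * c + t), (i : ℕ) + rectRow r c t 0 = j → w i < w j) :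
    IsCylTab (rectRow r c t) (fun _ => 0) 1 (ofWord htr w) := by
  have hle {x y : RectRowCell r c t}
      (h : x.2 * rectRow r c t 0 + x.1 ≤ y.2 * rectRow r c t 0 + y.1) :
      w (cellIndex htr x) ≤ w (cellIndex htr y) := hw h
  refine ⟨fun col hcol => ?_, fun _ _ => by simp only [conj_zero, zero_le], fun h0 => ?_,
    fun col p q hpq => ?_, fun col hcol p q h => ?_, fun h0 p q h => ?_⟩
  · rw [conj_eq hcol, conj_eq (by omega), conj_zero, conj_zero]
    split_ifs <;> omega
  · rw [conj_eq h0, conj_eq (by omega), conj_zero, conj_zero]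
    split_ifs <;> omega
  · have hmul := Nat.mul_le_mul_right (rectRow r c t 0) (Nat.succ_le_of_lt hpq)
    have hq := (index_lt_iff htr col.2).mpr q.2
    have hnext : (p : ℕ) * rectRow r c t 0 + col + rectRow r c t 0 ≤
        q * rectRow r c t 0 + col := by
      nlinarith
    exact (hlt (cellIndex htr ⟨col, p⟩) ⟨_, hnext.trans_lt hq⟩ rfl).trans_le (hw hnext)
  · simp only [conj_zero, zero_add] at h
    exact not_lt.mpr (hle (by simp only [h]; omega))
  · simp only [conj_zero, zero_add] at h
    have : (p + 1 : ℕ) * rectRow r c t 0 = p * rectRow r c t 0 + rectRow r c t 0 := by ring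
    exact not_lt.mpr (hle (by simp only [← h]; omega))

theorem card_fiber_le_width_iff (htr : t ≤ r) (w : Fin (r * c + t) → α) :
    (∀ x, #{i | w i = x} ≤ rectRow r c t 0) ↔ ∀ x, #{i | w i = x} ≤ r := by
  rcases Nat.eq_zero_or_pos c with rfl | hc
  · have (x : α) (K : ℕ) (hK : t ≤ K) : #{i | w i = x} ≤ K :=
      (card_le_univ _).trans (by simpa using hK)
    exact iff_of_true (fun x => this x _ (le_width htr)) fun x => this x _ htr
  · simp only [width_eq, hc, if_true]

theorem isCylTab_ofWord_iff (ht : 0 < t) (htr : t ≤ r) (w : Fin (r * c + t) → α) :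
    IsCylTab (rectRow r c t) (fun _ => 0) 1 (ofWord htr w) ↔
      Monotone w ∧ ∀ x, #{i | w i = x} ≤ r := by
  rw [← card_fiber_le_width_iff htr]
  refine ⟨fun hT => ?_, fun ⟨hw, hK⟩ =>
    isCylTab_ofWord htr hw ((hw.card_fiber_le_iff _).mp hK)⟩
  have hw := monotone_of_isCylTab ht htr hT
  exact ⟨hw, (hw.card_fiber_le_iff _).mpr fun _ _ => lt_of_isCylTab ht htr hT⟩

def cylTabEquiv (ht : 0 < t) (htr : t ≤ r) :
    {T : RectRowFilling r c t α // IsCylTab (rectRow r c t) (fun _ => 0) 1 T} ≃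
      {w : Fin (r * c + t) → α // Monotone w ∧ ∀ x, #{i | w i = x} ≤ r} :=
  (((Equiv.piCurry _).symm.trans ((cellEquiv ht htr).arrowCongr (Equiv.refl α))).symm.subtypeEquiv
    fun w => (isCylTab_ofWord_iff ht htr w).symm).symm

end RectRow

/-- for `λ = (r^c, t)` with `0 < t ≤ r`, a partition of `n = rc + t`,
the cylindric Schur function `s_{(r^c t)/∅/1}(x)` equals the sum of the monomial
symmetric functions `m_μ(x)` over all partitions `μ` of `n` with largest part at
most `r` (as polynomials in any number `N` of variables). -/
theorem stmt_10 (r c t : ℕ) (ht : 0 < t) (htr : t ≤ r) (N : ℕ) :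
    (∑ T : {T : ∀ col : Fin ((fun i => if i < c then r else if i = c then t else 0) 0),
          Fin (conj (fun i => if i < c then r else if i = c then t else 0) col
            - conj (fun _ => 0) col) → Fin N //
        IsCylTab (fun i => if i < c then r else if i = c then t else 0) (fun _ => 0) 1 T},
      uT (fun i => if i < c then r else if i = c then t else 0) (fun _ => 0) T.1)
    = ∑ μ ∈ Finset.univ.filter
        (fun μ : Nat.Partition (r * c + t) => ∀ p ∈ μ.parts, p ≤ r),
        msymm (Fin N) ℤ μ := by
  rw [MvPolynomial.sum_msymm_filter]
  calc _ = ∑ w : {w : Fin (r * c + t) → Fin N // Monotone w ∧ ∀ x, #{i | w i = x} ≤ r},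
        ∏ k, X (w.1 k) :=
        (Fintype.sum_equiv (RectRow.cylTabEquiv ht htr).symm _ _
          fun w => (RectRow.uT_ofWord ht htr w.1).symm).symm
    _ = ∑ s : {s : Sym (Fin N) (r * c + t) // ∀ x, (s : Multiset (Fin N)).count x ≤ r},
        ((s.1 : Multiset (Fin N)).map X).prod :=
        Fintype.sum_equiv (boundedMonotoneEquivSym _ _ r) _ _
          fun w => (prod_map_monotoneEquivSym X ⟨w.1, w.2.1⟩).symm
    _ = _ := Fintype.sum_equiv
        (Equiv.subtypeEquivRight fun s => (Nat.Partition.ofSym_parts_le_iff s r).symm) _ _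
        fun _ => rfl
end

section
/- Let P be a finite poset of size n and write X_{inc(P)}(x) = Σ_{λ ⊢ n} c^P_λ e_λ(x) (possible since X_{inc(P)} is symmetric of degree n). Then c^P_λ equals the coefficient of the squarefree monomial u_P = Π_{p∈P} u_p in m^P_λ(u), where m^P_λ(u) is the image of the monomial symmetric function m_λ under the ring homomorphism ψ: Λ → Z[u_p : p∈P] sending e_k(x) to e^P_k(u) = Σ_{i_1 <_P ··· <_P i_k} u_{i_1}···u_{i_k}. -/
open MvPolynomial
open scoped Classical

/-!
Work in `n = |P|` variables and encode a partition `μ ⊢ n` by the exponent vector `x^μ` of its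
parts. Expanding the product, the coefficient of `u_P` in `∏ᵢ e^P_{μᵢ}` counts families of chains
of sizes `μᵢ` partitioning `P`; these are exactly the colour classes of the proper colourings of
`inc(P)` with content `μ`, so it equals `[x^μ] X_{inc(P)} = Σ_ν c_ν [x^μ] e_ν`. The coefficient
`[x^ν] e_μ` counts `0-1` matrices with row sums `μ` and column sums `ν`, so it is symmetric in `μ`
and `ν` (transpose the matrix). Summing against `b` therefore gives `Σ_ν c_ν [x^ν] m_λ = c_λ`.
-/

open Finset

namespace MvPolynomial

variable {R σ ι : Type*} [CommSemiring R]

theorem prod_X_comp_eq_monomial (s : Finset ι) (f : ι → σ) :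
    ∏ i ∈ s, (X (f i) : MvPolynomial σ R) = monomial (∑ i ∈ s, Finsupp.single (f i) 1) 1 := by
  simp only [monomial_sum_one, X]

theorem prod_map_X_eq_monomial [DecidableEq σ] (t : Multiset σ) :
    (t.map X).prod = monomial (Multiset.toFinsupp t) (1 : R) := by
  induction t using Multiset.induction with
  | empty => simp
  | cons a t ih =>
    rw [Multiset.map_cons, Multiset.prod_cons, ih, ← Multiset.singleton_add,
      Multiset.toFinsupp_add, Multiset.toFinsupp_singleton, X, monomial_mul, one_mul]

theorem coeff_sum_monomial_one (s : Finset ι) (w : ι → σ →₀ ℕ) (d : σ →₀ ℕ) :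
    coeff d (∑ i ∈ s, monomial (w i) (1 : R)) = #{i ∈ s | w i = d} := by
  simp [coeff_sum, coeff_monomial, sum_boole]

theorem coeff_sum_prod_X_comp [Fintype ι] (s : Finset (ι → σ)) (d : σ →₀ ℕ) :
    coeff d (∑ f ∈ s, ∏ i, (X (f i) : MvPolynomial σ R))
      = #{f ∈ s | ∀ j, #{i | f i = j} = d j} := by
  simp only [prod_X_comp_eq_monomial, coeff_sum_monomial_one, Finsupp.ext_iff,
    Finsupp.finsetSum_apply, Finsupp.single_apply, sum_boole, Nat.cast_id]

theorem coeff_prod_sum_prod_X [Fintype ι] (S : ι → Finset (Finset σ)) (d : σ →₀ ℕ) :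
    coeff d (∏ i, ∑ t ∈ S i, ∏ j ∈ t, (X j : MvPolynomial σ R))
      = #{F ∈ Fintype.piFinset S | ∀ j, #{i | j ∈ F i} = d j} := by
  have prod_X_eq_monomial (t : Finset σ) := prod_X_comp_eq_monomial (R := R) t id
  simp only [id] at prod_X_eq_monomial
  simp only [prod_univ_sum, prod_X_eq_monomial, ← monomial_sum_one, coeff_sum_monomial_one,
    Finsupp.ext_iff, Finsupp.finsetSum_apply, Finsupp.single_apply, sum_ite_eq', sum_boole,
    Nat.cast_id]

theorem coeff_prod_esymm [Fintype σ] [Fintype ι] (c : ι → ℕ) (d : σ →₀ ℕ) :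
    coeff d (∏ i, esymm σ R (c i))
      = #{F ∈ Fintype.piFinset fun i => powersetCard (c i) univ | ∀ j, #{i | j ∈ F i} = d j} := by
  unfold esymm
  convert coeff_prod_sum_prod_X (R := R) _ d

theorem coeff_prod_esymm_comm [Fintype ι] (c d : ι →₀ ℕ) :
    coeff d (∏ i, esymm ι R (c i)) = coeff c (∏ i, esymm ι R (d i)) := by
  rw [coeff_prod_esymm, coeff_prod_esymm]
  congr 1
  let transpose (F : ι → Finset ι) (j : ι) : Finset ι := {i | j ∈ F i}
  have transpose_transpose (F : ι → Finset ι) : transpose (transpose F) = F := by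
    ext; simp [transpose]
  refine card_nbij' transpose transpose ?_ ?_
    (fun F _ => transpose_transpose F) (fun F _ => transpose_transpose F) <;>
  · intro F hF
    simp only [coe_filter, Fintype.mem_piFinset, mem_powersetCard_univ, Set.mem_ofPred_eq] at hF ⊢
    exact ⟨hF.2, fun j => (congrArg card (congrFun (transpose_transpose F) j)).trans (hF.1 j)⟩

end MvPolynomial

theorem IsChain.exists_strictMono_fin {α : Type*} [PartialOrder α] {s : Finset α}
    (hs : IsChain (· ≤ ·) (s : Set α)) :
    ∃ f : Fin #s → α, StrictMono f ∧ univ.image f = s := by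
  let := hs.linearOrder
  let e := Fintype.orderIsoFinOfCardEq (s : Set α) (k := #s) (by simp)
  refine ⟨fun i => (e i).1, fun i j hij => e.strictMono hij, ?_⟩
  ext a
  simp only [mem_image, mem_univ, true_and]
  exact ⟨by rintro ⟨i, rfl⟩; exact (e i).2, fun ha => ⟨e.symm ⟨a, ha⟩, by simp⟩⟩

section PosetChains

variable (P : Type*) [Fintype P] [PartialOrder P]

theorem eP_zero : eP P 0 = 1 := by
  simp [eP]

theorem eP_eq_sum_chains (k : ℕ) :
    eP P k = ∑ s ∈ (powersetCard k univ).filter fun s : Finset P => IsChain (· ≤ ·) (s : Set P),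
      ∏ p ∈ s, X p := by
  have strictMono_iff (f : Fin k → P) : (∀ a b, a < b → f a < f b) ↔ StrictMono f :=
    ⟨fun h a b => h a b, fun h a b => @h a b⟩
  simp only [eP, strictMono_iff]
  refine sum_nbij (fun f => univ.image f) ?_ ?_ ?_ ?_
  · intro f hf
    simp only [mem_filter, mem_univ, true_and] at hf
    simp only [mem_filter, mem_powersetCard_univ, coe_image, coe_univ, Set.image_univ,
      card_image_of_injective _ hf.injective, card_univ, Fintype.card_fin, true_and]
    exact hf.monotone.isChain_range
  · intro f hf g hg hfg
    simp only [coe_filter, mem_univ, true_and, Set.mem_ofPred_eq] at hf hg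
    rw [← hf.range_inj hg]
    simpa using congrArg ((↑) : Finset P → Set P) hfg
  · intro s hs
    simp only [coe_filter, mem_powersetCard_univ, Set.mem_ofPred_eq] at hs
    obtain ⟨rfl, hs⟩ := hs
    obtain ⟨f, hf, hfs⟩ := hs.exists_strictMono_fin
    exact ⟨f, by simpa using hf, hfs⟩
  · intro f hf
    simp only [mem_filter, mem_univ, true_and] at hf
    rw [prod_image (fun a _ b _ h => hf.injective h)]

omit [Fintype P] in
theorem isChain_fibers_iff {ι : Type*} (κ : P → ι) :
    (∀ i, IsChain (· ≤ ·) ({p | κ p = i} : Set P)) ↔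
      ∀ a b, a ≠ b → ¬(a ≤ b ∨ b ≤ a) → κ a ≠ κ b := by
  refine ⟨fun h a b hab hinc heq => hinc (h (κ b) heq rfl hab), ?_⟩
  rintro h i a (rfl : κ a = i) b hb hab
  by_contra hinc
  exact h a b hab hinc hb.symm

theorem coeff_one_prod_eP {ι : Type*} [Fintype ι] (c : ι → ℕ) :
    coeff (Finsupp.equivFunOnFinite.symm fun _ : P => 1) (∏ i, eP P (c i))
      = #{κ : P → ι | (∀ a b, a ≠ b → ¬(a ≤ b ∨ b ≤ a) → κ a ≠ κ b) ∧
          ∀ i, #{p | κ p = i} = c i} := by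
  simp only [eP_eq_sum_chains, coeff_prod_sum_prod_X, Nat.cast_inj]
  symm
  refine card_nbij (fun κ i => {p | κ p = i}) ?_ ?_ ?_
  · intro κ hκ
    simp only [mem_coe, mem_filter, mem_univ, true_and] at hκ
    obtain ⟨hproper, hsize⟩ := hκ
    simp only [mem_coe, mem_filter, Fintype.mem_piFinset, mem_powersetCard_univ]
    refine ⟨fun i => ⟨hsize i, ?_⟩, fun p => ?_⟩
    · simpa using (isChain_fibers_iff P κ).2 hproper i
    · simp [filter_eq]
  · intro κ _ κ' _ h
    funext p
    simpa [eq_comm] using congrArg (p ∈ ·) (congrFun h (κ p))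
  · intro F hF
    simp only [mem_coe, mem_filter, Fintype.mem_piFinset, mem_powersetCard_univ] at hF
    obtain ⟨hchains, hunique⟩ := hF
    choose κ hκ using fun p => card_eq_one.1 (hunique p)
    have hfiber (i : ι) : ({p | κ p = i} : Finset P) = F i := by
      ext p
      simpa [eq_comm] using congrArg (i ∈ ·) (hκ p)
    simp only [Set.mem_image, mem_coe, mem_filter, mem_univ, true_and]
    refine ⟨κ, ⟨(isChain_fibers_iff P κ).1 fun i => ?_, fun i => ?_⟩, funext_iff.2 hfiber⟩
    · simpa [← hfiber i] using (hchains i).2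
    · rw [hfiber, (hchains i).1]

theorem coeff_chromPoly {N : ℕ} (d : Fin N →₀ ℕ) :
    coeff d (chromPoly P N)
      = #{κ : P → Fin N | (∀ a b, a ≠ b → ¬(a ≤ b ∨ b ≤ a) → κ a ≠ κ b) ∧
          ∀ i, #{p | κ p = i} = d i} := by
  rw [chromPoly, coeff_sum_prod_X_comp, filter_filter]
  congr!

theorem coeff_one_prod_eP_eq_coeff_chromPoly {N : ℕ} (d : Fin N →₀ ℕ) :
    coeff (Finsupp.equivFunOnFinite.symm fun _ : P => 1) (∏ i, eP P (d i))
      = coeff d (chromPoly P N) := by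
  rw [coeff_one_prod_eP, coeff_chromPoly]
  congr!

end PosetChains

namespace Nat.Partition

variable {n : ℕ}

theorem card_parts_le (μ : n.Partition) : Multiset.card μ.parts ≤ n := by
  simpa [μ.parts_sum] using Multiset.card_nsmul_le_sum fun _ h => μ.parts_pos h

/-- The parts are listed in the (arbitrary) order of `Multiset.toList`, padded with zeros;
only the multiset of values matters below. -/
noncomputable def exponent (μ : n.Partition) : Fin n →₀ ℕ :=
  Finsupp.equivFunOnFinite.symm fun j => μ.parts.toList.getD j 0

theorem map_exponent_univ (μ : n.Partition) :
    (univ : Finset (Fin n)).val.map μ.exponent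
      = μ.parts + Multiset.replicate (n - Multiset.card μ.parts) 0 := by
  have hle : Multiset.card μ.parts ≤ n := μ.card_parts_le
  have hlist : List.ofFn μ.exponent
      = μ.parts.toList ++ List.replicate (n - μ.parts.toList.length) 0 := by
    apply List.ext_getElem (by simp; omega)
    intro i hi _
    simp only [List.length_ofFn] at hi
    simp only [List.getElem_ofFn, exponent, Finsupp.coe_equivFunOnFinite_symm,
      List.getElem_append, List.getElem_replicate]
    split_ifs with h
    · exact List.getD_eq_getElem _ _ h
    · exact List.getD_eq_default _ _ (not_lt.1 h)
  rw [Fin.univ_val_map, hlist, ← Multiset.coe_add, Multiset.coe_toList, Multiset.coe_replicate,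
    Multiset.length_toList]

theorem prod_map_parts_eq_prod_exponent {M : Type*} [CommMonoid M] (μ : n.Partition)
    {g : ℕ → M} (hg : g 0 = 1) : (μ.parts.map g).prod = ∏ j, g (μ.exponent j) := by
  rw [prod_eq_multiset_prod, ← Function.comp_def g, ← Multiset.map_map, map_exponent_univ]
  simp [hg]

theorem card_toMultiset_exponent (μ : n.Partition) :
    Multiset.card (Finsupp.toMultiset μ.exponent) = n := by
  rw [Finsupp.card_toMultiset, Finsupp.sum_fintype _ _ (fun _ => rfl), sum_eq_multiset_sum]
  simp only [id, map_exponent_univ]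
  simp [μ.parts_sum]

theorem ofSym_toMultiset_exponent (μ : n.Partition) :
    ofSym ⟨Finsupp.toMultiset μ.exponent, μ.card_toMultiset_exponent⟩ = μ := by
  ext1
  have hsupport : μ.exponent.support = univ.filter (μ.exponent · ≠ 0) := by
    ext; simp
  have hfilter := Multiset.filter_map (· ≠ 0) μ.exponent univ.val
  simp only [Function.comp_def] at hfilter
  simp only [ofSym, Finsupp.count_toMultiset, ← Multiset.toFinset_val,
    Finsupp.toFinset_toMultiset, hsupport, filter_val]
  rw [← hfilter, map_exponent_univ, Multiset.filter_add,
    Multiset.filter_eq_self.2 fun a h => (μ.parts_pos h).ne',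
    Multiset.filter_eq_nil.2 fun a h => by simp [Multiset.eq_of_mem_replicate h], add_zero]

end Nat.Partition

namespace MvPolynomial

variable {R : Type*} [CommSemiring R] {n : ℕ}

theorem coeff_exponent_msymm (lam ν : n.Partition) :
    coeff ν.exponent (msymm (Fin n) R lam) = if ν = lam then 1 else 0 := by
  let s₀ : Sym (Fin n) n := ⟨Finsupp.toMultiset ν.exponent, ν.card_toMultiset_exponent⟩
  have hterm (t : {s : Sym (Fin n) n // Nat.Partition.ofSym s = lam}) :
      coeff ν.exponent ((t.1.1.map X).prod : MvPolynomial (Fin n) R)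
        = if t.1 = s₀ then 1 else 0 := by
    rw [prod_map_X_eq_monomial, coeff_monomial]
    exact if_congr ⟨fun h => Subtype.ext (Multiset.toFinsupp_eq_iff.1 h),
      fun h => Multiset.toFinsupp_eq_iff.2 (congrArg Subtype.val h)⟩ rfl rfl
  rw [msymm, coeff_sum, sum_congr rfl fun t _ => hterm t]
  split_ifs with h
  · subst h
    let t₀ : {s : Sym (Fin n) n // Nat.Partition.ofSym s = ν} :=
      ⟨s₀, ν.ofSym_toMultiset_exponent⟩
    rw [Fintype.sum_eq_single t₀ fun t ht => if_neg fun h => ht (Subtype.ext h)]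
    exact if_pos rfl
  · refine sum_eq_zero fun t _ => if_neg fun ht => h ?_
    rw [← t.2, ht]
    exact ν.ofSym_toMultiset_exponent.symm

theorem coeff_exponent_esymmPart_comm (μ ν : n.Partition) :
    coeff ν.exponent (esymmPart (Fin n) R μ) = coeff μ.exponent (esymmPart (Fin n) R ν) := by
  simp only [esymmPart, μ.prod_map_parts_eq_prod_exponent (esymm_zero (Fin n) R),
    ν.prod_map_parts_eq_prod_exponent (esymm_zero (Fin n) R)]
  exact coeff_prod_esymm_comm _ _

end MvPolynomial

/-- for a finite poset `P` with `|P| = n` and `λ ⊢ n`, the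
`e`-expansion coefficient `c^P_λ` of `X_{inc(P)}` equals the coefficient of the
squarefree monomial `u_P = Π_p u_p` in `m^P_λ(u) = ψ(m_λ)`, where `ψ` sends
`e_k(x)` to `e^P_k(u)` (so `ψ(m_λ) = Σ_μ b_μ Π_i e^P_{μ_i}` whenever
`m_λ = Σ_μ b_μ e_μ`). -/
theorem stmt_14 (P : Type*) [Fintype P] [PartialOrder P]
    (lam : Nat.Partition (Fintype.card P))
    (coef : Nat.Partition (Fintype.card P) → ℤ)
    (hcoef : ∀ N, chromPoly P N
        = ∑ μ : Nat.Partition (Fintype.card P), C (coef μ) * esymmPart (Fin N) ℤ μ)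
    (b : Nat.Partition (Fintype.card P) → ℤ)
    (hb : ∀ N, msymm (Fin N) ℤ lam
        = ∑ μ : Nat.Partition (Fintype.card P), C (b μ) * esymmPart (Fin N) ℤ μ) :
    coef lam
      = MvPolynomial.coeff (Finsupp.equivFunOnFinite.symm fun _ : P => 1)
          (∑ μ : Nat.Partition (Fintype.card P),
            C (b μ) * (μ.parts.map (fun k => eP P k)).prod) := by
  have hcoeff_eP (μ : (Fintype.card P).Partition) :
      coeff (Finsupp.equivFunOnFinite.symm fun _ : P => 1) (μ.parts.map (fun k => eP P k)).prod
        = ∑ ν, coef ν * coeff μ.exponent (esymmPart (Fin (Fintype.card P)) ℤ ν) := by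
    rw [μ.prod_map_parts_eq_prod_exponent (eP_zero P), coeff_one_prod_eP_eq_coeff_chromPoly,
      hcoef, coeff_sum]
    simp only [coeff_C_mul]
  have hmsymm (ν : (Fintype.card P).Partition) :
      ∑ μ, b μ * coeff ν.exponent (esymmPart (Fin (Fintype.card P)) ℤ μ)
        = if ν = lam then 1 else 0 := by
    rw [← coeff_exponent_msymm lam ν, hb, coeff_sum]
    simp only [coeff_C_mul]
  calc coef lam = ∑ ν, coef ν * if ν = lam then 1 else 0 := by simp
    _ = ∑ ν, coef ν * ∑ μ, b μ * coeff ν.exponent (esymmPart (Fin (Fintype.card P)) ℤ μ) := by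
      simp only [hmsymm]
    _ = ∑ μ, b μ * ∑ ν, coef ν * coeff μ.exponent (esymmPart (Fin (Fintype.card P)) ℤ ν) := by
      simp only [mul_sum]
      rw [sum_comm]
      refine sum_congr rfl fun μ _ => sum_congr rfl fun ν _ => ?_
      rw [coeff_exponent_esymmPart_comm, mul_left_comm]
    _ = _ := by simp only [coeff_sum, coeff_C_mul, hcoeff_eP]
end

section
/- Let P be a (3+1)-free poset and A a P-array with intersecting columns. Then A has an adjacent pair of intersecting columns. More precisely, if i < j is a pair of intersecting columns with j − i minimal, then j − i = 1; the proof uses that a failure would produce four elements a_{m−1,j} <_P a_{m,j} <_P a_{m−j+i+1,i} with a_{m−1,j−1} incomparable to all three, i.e., an induced (3+1) subposet. -/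
open MvPolynomial
open scoped Classical

/-- for a `(3+1)`-free poset `P`, a `P`-array with a pair of
intersecting columns has an adjacent pair of intersecting columns; more precisely,
an intersecting pair `i < j` with `j - i` minimal has `j = i + 1`. -/
theorem stmt_17 (P : Type*) [PartialOrder P] (h31 : ThreePlusOneFree P)
    (l : ℕ) (α β : ℕ → ℕ)
    (hβ : ∀ c, c + 1 < l → β (c + 1) ≤ β c)
    (hsub : ∀ c, c < l → β c ≤ α c)
    (A : ℕ → ℕ → P) (hA : ColStrict A l α β) :
    ((∃ i j, j < l ∧ Intersecting A α β i j) →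
      ∃ c, c + 1 < l ∧ Intersecting A α β c (c + 1))
    ∧ ∀ i j, j < l → Intersecting A α β i j →
        (∀ i' j', j' < l → Intersecting A α β i' j' → j - i ≤ j' - i') →
        j = i + 1 := by
  have key : ∀ i j, j < l → i + 2 ≤ j → Intersecting A α β i j →
      Intersecting A α β i (j - 1) ∨ Intersecting A α β (j - 1) j := by
    rintro i j hjl h2 ⟨m, -, hβj, hαj, w, hw, hβi, hdisj⟩
    obtain ⟨k, rfl⟩ : ∃ k, j = k + 1 := ⟨j - 1, by omega⟩
    simp only [Nat.add_sub_cancel]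
    obtain ⟨n, rfl⟩ : ∃ n, m = n + 1 := ⟨m - 1, by omega⟩
    have hwn : w ≤ n := by omega
    have hmono : ∀ a b : ℕ, a ≤ b → b < l → β b ≤ β a := by
      intro a b hab
      induction hab with
      | refl => exact fun _ => le_rfl
      | @step b hb ih => intro hl; exact (hβ b hl).trans (ih (by omega))
    have hβk : β k ≤ β i := hmono i k (by omega) (by omega)
    have hβkn : β k ≤ n := le_trans hβk (le_trans hβi hwn)
    have hβk1 : β (k + 1) ≤ n := le_trans (hβ k hjl) hβkn
    by_cases h1 : α k ≤ n + 1
    · exact Or.inr ⟨n + 1, by omega, hβj, hαj, n + 1, by omega, by omega,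
        Or.inl h1⟩
    push_neg at h1
    by_cases h2' : α i ≤ w
    · exact Or.inl ⟨n, by omega, hβkn, by omega, w, by omega, hβi, Or.inl h2'⟩
    push_neg at h2'
    have hbc : A (n + 1) (k + 1) < A w i := hdisj.resolve_left (by omega)
    by_cases hx1 : A n k < A w i
    · exact Or.inl ⟨n, by omega, hβkn, by omega, w, by omega, hβi, Or.inr hx1⟩
    by_cases hx2 : A (n + 1) (k + 1) < A (n + 1) k
    · exact Or.inr ⟨n + 1, by omega, hβj, hαj, n + 1, by omega, by omega,
        Or.inr hx2⟩
    by_cases hx3 : A n (k + 1) < A n k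
    · exact Or.inr ⟨n, by omega, hβk1, by omega, n, by omega, hβkn, Or.inr hx3⟩
    exfalso
    set a := A n (k + 1) with ha
    set b := A (n + 1) (k + 1) with hb
    set c := A w i with hc
    set x := A n k with hx
    have hab : a < b := hA (k + 1) n (n + 1) hjl hβk1 (by omega) hαj
    have hcolk : x < A (n + 1) k := hA k n (n + 1) (by omega) hβkn (by omega) (by omega)
    refine h31 ⟨a, b, c, x, hab, hbc, ?_, ?_, ?_⟩
    · rintro (h | h)
      · exact hx1 (lt_of_le_of_lt h (hab.trans hbc))
      · rcases eq_or_lt_of_le h with h | h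
        · exact hx1 (h ▸ hab.trans hbc)
        · exact hx3 h
    · rintro (h | h)
      · exact hx1 (lt_of_le_of_lt h hbc)
      · exact hx2 (lt_of_le_of_lt h hcolk)
    · rintro (h | h)
      · rcases eq_or_lt_of_le h with h | h
        · exact hx2 (lt_of_lt_of_le hbc (le_of_eq h.symm) |>.trans hcolk)
        · exact hx1 h
      · exact hx2 ((hbc.trans_le h).trans hcolk)
  have part2 : ∀ i j, j < l → Intersecting A α β i j →
      (∀ i' j', j' < l → Intersecting A α β i' j' → j - i ≤ j' - i') → j = i + 1 := by
    intro i j hjl hint hmin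
    have hint' := hint
    obtain ⟨m, hij, -⟩ := hint'
    by_contra hne
    have h2 : i + 2 ≤ j := by omega
    rcases key i j hjl h2 hint with h | h
    · have := hmin i (j - 1) (by omega) h; omega
    · have := hmin (j - 1) j hjl h; omega
  refine ⟨?_, part2⟩
  rintro ⟨i, j, hjl, hint⟩
  have hne : {d | ∃ p : ℕ × ℕ, p.2 < l ∧ Intersecting A α β p.1 p.2 ∧ p.2 - p.1 = d}.Nonempty :=
    ⟨j - i, ⟨(i, j), hjl, hint, rfl⟩⟩
  obtain ⟨⟨i0, j0⟩, hj0l, hint0, hd⟩ := Nat.sInf_mem hne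
  have hmin : ∀ i' j', j' < l → Intersecting A α β i' j' → j0 - i0 ≤ j' - i' := by
    intro i' j' ha hb
    have hm : j' - i' ∈ {d | ∃ p : ℕ × ℕ, p.2 < l ∧ Intersecting A α β p.1 p.2 ∧ p.2 - p.1 = d} :=
      ⟨(i', j'), ha, hb, rfl⟩
    have := Nat.sInf_le hm
    omega
  have heq := part2 i0 j0 hj0l hint0 hmin
  exact ⟨i0, by rw [← heq]; exact hj0l, by rwa [← heq]⟩
end
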